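/- For every 2AFW A = (Q,Σ,δ,q₀,F) there exists a nondeterministic finite automaton A_n over Σ with at most 2^{O(|Q|²)} states such that for all finite words w, A_n accepts w if and only if A accepts w. -/

import Mathlib

/-- Positive Boolean formulas over `X` (with `true` and `false`, no negation). -/
inductive PBF (X : Type) where
  | tru : PBF X
  | fls : PBF X
  | var : X → PBF X
  | conj : PBF X → PBF X → PBF X
  | disj : PBF X → PBF X → PBF X

/-- A set `M ⊆ X` satisfies a positive Boolean formula. -/
def PBF.satBy {X : Type} (M : Set X) : PBF X → Prop
  | .tru => True
  | .fls => False
  | .var x => x ∈ M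
  | .conj a b => a.satBy M ∧ b.satBy M
  | .disj a b => a.satBy M ∨ b.satBy M

/-- Directions of a two-way automaton: −1, 0, 1. -/
inductive Dir where
  | back : Dir
  | stay : Dir
  | fwd : Dir
deriving DecidableEq

/-- Applying a direction to a position (undefined when moving left of 0). -/
def Dir.apply : Dir → ℕ → Option ℕ
  | .back, 0 => none
  | .back, i + 1 => some i
  | .stay, i => some i
  | .fwd, i => some (i + 1)

/-- A two-way alternating automaton on finite words `(Q, Σ, δ, q₀, F)`. -/
structure TAFW (Q A : Type) where
  delta : Q → A → PBF (Q × Dir)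
  start : Q
  acc : Set Q

/-- Configurations of a 2AFW: a state with a read position, or `Accept`. -/
inductive Config (Q : Type) where
  | conf : Q → ℕ → Config Q
  | accept : Config Q

variable {Q A : Type}

/-- `ρ` (a partial labelling of the tree of finite index sequences) is a run of
the 2AFW `M` on `w` from position `k`. -/
structure IsRun (M : TAFW Q A) (w : List A) (k : ℕ)
    (ρ : List ℕ → Option (Config Q)) : Prop where
  root : ρ [] = some (.conf M.start k)
  tree : ∀ x n, (ρ (x ++ [n])).isSome → (ρ x).isSome
  accept_leaf : ∀ x, ρ x = some .accept → ∀ n, ρ (x ++ [n]) = none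
  node : ∀ x q i, ρ x = some (.conf q i) → ∃ a, w[i]? = some a ∧
    ((M.delta q a = .fls ∧ ∀ n, ρ (x ++ [n]) = none) ∨
     (M.delta q a = .tru ∧ (∃ n, ρ (x ++ [n]) = some .accept) ∧
        ∀ n c, ρ (x ++ [n]) = some c → c = .accept) ∨
     (M.delta q a ≠ .tru ∧ M.delta q a ≠ .fls ∧
       ∃ S : Set (Q × Dir), (M.delta q a).satBy S ∧
         (∀ τ ∈ S, ∃ n j, τ.2.apply i = some j ∧ ρ (x ++ [n]) = some (.conf τ.1 j)) ∧
         (∀ n c, ρ (x ++ [n]) = some c →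
            ∃ τ ∈ S, ∃ j, τ.2.apply i = some j ∧ c = .conf τ.1 j)))

/-- A leaf of the run tree. -/
def IsLeaf (ρ : List ℕ → Option (Config Q)) (x : List ℕ) : Prop :=
  (ρ x).isSome ∧ ∀ n, ρ (x ++ [n]) = none

/-- An infinite branch of the run tree, given by successive child indices. -/
def InfBranch (ρ : List ℕ → Option (Config Q)) (b : ℕ → ℕ) : Prop :=
  ∀ n, (ρ ((List.range n).map b)).isSome

/-- A run is accepting when every finite branch ends in `Accept` and every
infinite branch has some accepting state occurring infinitely often. -/
def AcceptingRun (M : TAFW Q A) (w : List A) (k : ℕ)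
    (ρ : List ℕ → Option (Config Q)) : Prop :=
  IsRun M w k ρ ∧
  (∀ x, IsLeaf ρ x → ρ x = some .accept) ∧
  (∀ b, InfBranch ρ b →
    ∃ f ∈ M.acc, ∀ N, ∃ n ≥ N, ∃ i, ρ ((List.range n).map b) = some (.conf f i))

/-- The 2AFW `M` accepts `w` from position `k`. -/
def TAFW.Accepts (M : TAFW Q A) (w : List A) (k : ℕ) : Prop :=
  ∃ ρ, AcceptingRun M w k ρ

/-!
A word is accepted exactly when it carries a certificate: a memoryless strategy word `γ`, the
sets `α` of active states, and an annotation `η` of `γ`-paths returning to their rightmost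
position, closed under composition, in which every loop visits an accepting state.

From an accepting run, the non-accepting-child relation is well founded (an infinite chain of
such children would be an infinite branch visiting accepting states finitely often), so nodes
carry ordinal ranks; playing at each configuration the moves of a node of least rank makes the
rank drop at every non-accepting state, and annotating "the rank drops" gives the certificate.
Conversely, unfolding `γ` gives a run whose infinite branches eventually stay left of a position
they revisit infinitely often; two visits in the same state close a loop whose annotation is
accepting. All certificate conditions relate neighbouring positions only, so an NFA whose states
hold `(α (i-1), γ (i-1), η (i-1), α i)` checks them, with `2 ^ O(|Q|²)` states.
-/

instance : Fintype Dir :=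
  ⟨⟨{.back, .stay, .fwd}, by decide⟩, by intro d; cases d <;> decide⟩

lemma Dir.card_eq : Fintype.card Dir = 3 := rfl

lemma PBF.satBy_mono {X : Type} {S T : Set X} (h : S ⊆ T) :
    ∀ {φ : PBF X}, φ.satBy S → φ.satBy T
  | .tru, _ => trivial
  | .var _, hφ => h hφ
  | .conj _ _, hφ => ⟨satBy_mono h hφ.1, satBy_mono h hφ.2⟩
  | .disj _ _, hφ => hφ.imp (satBy_mono h) (satBy_mono h)

lemma exists_first_after {p : ℕ → Prop} {s t : ℕ} (hst : s < t) (ht : p t) :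
    ∃ r, s < r ∧ r ≤ t ∧ p r ∧ ∀ m, s < m → m < r → ¬ p m := by
  classical
  have hex : ∃ r, s < r ∧ p r := ⟨t, hst, ht⟩
  exact ⟨Nat.find hex, (Nat.find_spec hex).1, Nat.find_min' hex ⟨hst, ht⟩,
    (Nat.find_spec hex).2, fun m hsm hm hpm => Nat.find_min hex hm ⟨hsm, hpm⟩⟩

open Filter in
lemma Nat.exists_frequently_eq_eventually_le {p : ℕ → ℕ} {n : ℕ} (h : ∀ᶠ m in atTop, p m ≤ n) :
    ∃ i, (∃ᶠ m in atTop, p m = i) ∧ ∀ᶠ m in atTop, p m ≤ i := by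
  classical
  have hex : ∃ i, ∀ᶠ m in atTop, p m ≤ i := ⟨n, h⟩
  refine ⟨Nat.find hex, fun hne => ?_, Nat.find_spec hex⟩
  have hlt : ∀ᶠ m in atTop, p m < Nat.find hex :=
    ((Nat.find_spec hex).and hne).mono fun m hm => lt_of_le_of_ne hm.1 hm.2
  have hzero : Nat.find hex = 0 :=
    by_contra fun h0 => Nat.find_min hex (Nat.sub_one_lt h0) (hlt.mono fun m hm => by omega)
  exact (hlt.mono fun m hm => by omega : ∀ᶠ m in atTop, False).exists.elim fun _ h => h

lemma List.map_range_prefix {β : Type} (b : ℕ → β) {n m : ℕ} (h : n ≤ m) :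
    (List.range n).map b <+: (List.range m).map b := by
  obtain ⟨k, rfl⟩ := Nat.exists_eq_add_of_le h
  rw [List.range_add, List.map_append]
  exact List.prefix_append _ _

lemma exists_map_range_eq_of_eq_append {f : ℕ → List ℕ} (hf : ∀ n, ∃ m, f (n + 1) = f n ++ [m]) :
    ∃ b : ℕ → ℕ, ∀ n, (List.range ((f 0).length + n)).map b = f n := by
  choose g hg using hf
  refine ⟨fun j => if h : j < (f 0).length then (f 0)[j] else g (j - (f 0).length), fun n => ?_⟩
  induction n with
  | zero => exact List.ext_getElem (by simp) fun j h _ => by simp_all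
  | succ n ih => rw [← Nat.add_assoc, List.range_succ, List.map_append, ih, hg]; simp

lemma NFA.mem_evalFrom_iff_exists_chain {σ : Type} (N : NFA A σ) {S : Set σ} {w : List A}
    {s : σ} : s ∈ N.evalFrom S w ↔ ∃ f : ℕ → σ, f 0 ∈ S ∧
      (∀ k (hk : k < w.length), f (k + 1) ∈ N.step (f k) w[k]) ∧ f w.length = s := by
  induction w generalizing S with
  | nil =>
    exact ⟨fun h => ⟨fun _ => s, h, fun k hk => by simp at hk, rfl⟩, fun ⟨f, h0, _, hf⟩ => hf ▸ h0⟩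
  | cons a w ih =>
    rw [NFA.evalFrom_cons, ih]
    constructor
    · rintro ⟨f, hf0, hf, rfl⟩
      obtain ⟨t, ht, hft⟩ := NFA.mem_stepSet.1 hf0
      refine ⟨fun | 0 => t | k + 1 => f k, ht, ?_, rfl⟩
      rintro (_ | k) hk
      exacts [hft, hf k (by simpa using hk)]
    · rintro ⟨f, hf0, hf, rfl⟩
      exact ⟨fun k => f (k + 1), NFA.mem_stepSet.2 ⟨f 0, hf0, hf 0 (by simp)⟩,
        fun k hk => hf (k + 1) (by simpa using hk), rfl⟩

def moves (g : Set (Q × Dir × Q)) (q : Q) : Set (Q × Dir) := {τ | (q, τ.2, τ.1) ∈ g}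

def StrategyStep (γ : ℕ → Set (Q × Dir × Q)) (c c' : Q × ℕ) : Prop :=
  ∃ d, (c.1, d, c'.1) ∈ γ c.2 ∧ d.apply c.2 = some c'.2

section StrategyStep

variable {γ : ℕ → Set (Q × Dir × Q)} {c c' : Q × ℕ}

lemma StrategyStep.stay_mem (h : StrategyStep γ c c') (hle : c'.2 = c.2) :
    (c.1, .stay, c'.1) ∈ γ c.2 := by
  obtain ⟨d, hd, happ⟩ := h
  rcases d with _ | _ | _ <;> rcases hc : c.2 with _ | i <;> simp_all [Dir.apply]

lemma StrategyStep.fwd_mem (h : StrategyStep γ c c') (hlt : c.2 < c'.2) :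
    c'.2 = c.2 + 1 ∧ (c.1, .fwd, c'.1) ∈ γ c.2 := by
  obtain ⟨d, hd, happ⟩ := h
  rcases d with _ | _ | _ <;> rcases hc : c.2 with _ | i <;> simp_all [Dir.apply]

lemma StrategyStep.back_mem (h : StrategyStep γ c c') (hlt : c'.2 < c.2) :
    c.2 = c'.2 + 1 ∧ (c.1, .back, c'.1) ∈ γ c.2 := by
  obtain ⟨d, hd, happ⟩ := h
  rcases d with _ | _ | _ <;> rcases hc : c.2 with _ | i <;>
    simp_all [Dir.apply] <;> omega

end StrategyStep

/-- A strategy word `γ` with annotation `η` and the sets `α i` of states active at position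
`i`. The flag of an annotation triple `(q, P, q')` is a proposition, read as "an accepting state
is visited", so `Set (Q × Prop × Q)` plays the role of `2^{Q × {0,1} × Q}`. -/
structure IsCertificate (M : TAFW Q A) (w : List A) (γ : ℕ → Set (Q × Dir × Q))
    (η : ℕ → Set (Q × Prop × Q)) (α : ℕ → Set Q) : Prop where
  start_mem : M.start ∈ α 0
  lt_length : ∀ i q, q ∈ α i → i < w.length
  satBy : ∀ i q a, q ∈ α i → w[i]? = some a →
    (M.delta q a).satBy (moves (γ i) q) ∧ (M.delta q a ≠ .tru → (moves (γ i) q).Nonempty)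
  move_mem : ∀ i q d q', (q, d, q') ∈ γ i → q ∈ α i ∧ ∃ j, d.apply i = some j ∧ q' ∈ α j
  ann_stay : ∀ i q q', (q, .stay, q') ∈ γ i → (q, q' ∈ M.acc, q') ∈ η i
  ann_trans : ∀ i q P q' P' q'', (q, P, q') ∈ η i → (q', P', q'') ∈ η i →
    (q, P ∨ P', q'') ∈ η i
  ann_back_fwd : ∀ i q q₁ q', (q, .back, q₁) ∈ γ (i + 1) → (q₁, .fwd, q') ∈ γ i →
    (q, q₁ ∈ M.acc ∨ q' ∈ M.acc, q') ∈ η (i + 1)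
  ann_back_ann_fwd : ∀ i q q₁ P q₂ q', (q, .back, q₁) ∈ γ (i + 1) → (q₁, P, q₂) ∈ η i →
    (q₂, .fwd, q') ∈ γ i → (q, q₁ ∈ M.acc ∨ P ∨ q' ∈ M.acc, q') ∈ η (i + 1)
  ann_loop : ∀ i q P, (q, P, q) ∈ η i → P

structure IsStrategyPath (γ : ℕ → Set (Q × Dir × Q)) (bnd : ℕ) (c : ℕ → Q × ℕ) (s t : ℕ) :
    Prop where
  step : ∀ m, s ≤ m → m < t → StrategyStep γ (c m) (c (m + 1))
  le_bnd : ∀ m, s ≤ m → m ≤ t → (c m).2 ≤ bnd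

def VisitsAcc (M : TAFW Q A) (c : ℕ → Q × ℕ) (s t : ℕ) : Prop :=
  ∃ m, s < m ∧ m ≤ t ∧ (c m).1 ∈ M.acc

lemma VisitsAcc.mono {M : TAFW Q A} {c : ℕ → Q × ℕ} {s t s' t' : ℕ} (h : VisitsAcc M c s' t')
    (hs : s ≤ s') (ht : t' ≤ t) : VisitsAcc M c s t :=
  let ⟨m, hsm, hmt, hm⟩ := h
  ⟨m, by omega, by omega, hm⟩

section Certificate

variable {M : TAFW Q A} {w : List A} {γ : ℕ → Set (Q × Dir × Q)}
  {η : ℕ → Set (Q × Prop × Q)} {α : ℕ → Set Q}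

lemma IsCertificate.exists_ann_of_excursion (hg : IsCertificate M w γ η α) {c : ℕ → Q × ℕ}
    {j s r : ℕ} (hsr : s + 2 ≤ r)
    (hback : ((c s).1, .back, (c (s + 1)).1) ∈ γ (j + 1))
    (hfwd : ((c (r - 1)).1, .fwd, (c r).1) ∈ γ j)
    (hinner : s + 2 < r →
      ∃ P, ((c (s + 1)).1, P, (c (r - 1)).1) ∈ η j ∧ (P → VisitsAcc M c (s + 1) (r - 1))) :
    ∃ P, ((c s).1, P, (c r).1) ∈ η (j + 1) ∧ (P → VisitsAcc M c s r) := by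
  rcases hsr.eq_or_lt with rfl | hsr
  · refine ⟨(c (s + 1)).1 ∈ M.acc ∨ (c (s + 2)).1 ∈ M.acc, hg.ann_back_fwd _ _ _ _ hback hfwd, ?_⟩
    rintro (h | h)
    exacts [⟨s + 1, by omega, by omega, h⟩, ⟨s + 2, by omega, le_rfl, h⟩]
  · obtain ⟨P, hP, hPvis⟩ := hinner hsr
    refine ⟨(c (s + 1)).1 ∈ M.acc ∨ P ∨ (c r).1 ∈ M.acc,
      hg.ann_back_ann_fwd _ _ _ _ _ _ hback hP hfwd, ?_⟩
    rintro (h | h | h)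
    exacts [⟨s + 1, by omega, by omega, h⟩, (hPvis h).mono (by omega) (by omega),
      ⟨r, by omega, le_rfl, h⟩]

/-- A closed annotation summarises every strategy path that starts and ends at its rightmost
position: split the path at its returns to that position; each piece is a stay move or an
excursion to the left. -/
theorem IsCertificate.exists_ann_of_isStrategyPath (hg : IsCertificate M w γ η α)
    {c : ℕ → Q × ℕ} {i s t : ℕ} (hst : s < t) (hc : IsStrategyPath γ i c s t)
    (hs : (c s).2 = i) (ht : (c t).2 = i) :
    ∃ P, ((c s).1, P, (c t).1) ∈ η i ∧ (P → VisitsAcc M c s t) := by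
  induction hk : t - s using Nat.strong_induction_on generalizing i s t with
  | _ k IH =>
  subst hk
  obtain ⟨r, hsr, hrt, hr, hfirst⟩ := exists_first_after (p := fun m => (c m).2 = i) hst ht
  have hfirst_piece : ∃ P, ((c s).1, P, (c r).1) ∈ η i ∧ (P → VisitsAcc M c s r) := by
    have hstep := hc.step s le_rfl hst
    rcases (hc.le_bnd (s + 1) (by omega) (by omega)).lt_or_eq with hdown | hstay
    · obtain ⟨hi, hback⟩ := hstep.back_mem (by omega)
      set j := (c (s + 1)).2
      have hbelow : ∀ m, s < m → m < r → (c m).2 ≤ j := fun m hsm hmr => by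
        have := hc.le_bnd m (by omega) (by omega)
        have := hfirst m hsm hmr
        omega
      have hr2 : s + 2 ≤ r := by
        by_contra
        obtain rfl : r = s + 1 := by omega
        omega
      have hlast : StrategyStep γ (c (r - 1)) (c r) := by
        simpa [Nat.sub_add_cancel (by omega : 1 ≤ r)] using hc.step (r - 1) (by omega) (by omega)
      obtain ⟨hj, hfwd⟩ := hlast.fwd_mem (by have := hbelow (r - 1) (by omega) (by omega); omega)
      replace hj : (c (r - 1)).2 = j := by omega
      rw [hj] at hfwd
      rw [hi] at hback
      rw [← hs, hi]
      exact hg.exists_ann_of_excursion hr2 hback hfwd fun hr3 => IH _ (by omega) (by omega)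
        ⟨fun m hm hm' => hc.step m (by omega) (by omega),
          fun m hm hm' => hbelow m (by omega) (by omega)⟩ rfl hj rfl
    · obtain rfl : r = s + 1 :=
        le_antisymm (by by_contra; exact hfirst (s + 1) (by omega) (by omega) hstay) hsr
      refine ⟨(c (s + 1)).1 ∈ M.acc, ?_, fun h => ⟨s + 1, by omega, le_rfl, h⟩⟩
      rw [← hs]
      exact hg.ann_stay _ _ _ (hstep.stay_mem (by omega))
  obtain ⟨P, hP, hPvis⟩ := hfirst_piece
  rcases hrt.eq_or_lt with rfl | hrt
  · exact ⟨P, hP, hPvis⟩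
  · obtain ⟨P', hP', hP'vis⟩ := IH (t - r) (by omega) hrt
      ⟨fun m hm => hc.step m (by omega), fun m hm => hc.le_bnd m (by omega)⟩ hr ht rfl
    exact ⟨P ∨ P', hg.ann_trans _ _ _ _ _ _ hP hP', fun h =>
      h.elim (fun h => (hPvis h).mono le_rfl hrt.le) fun h => (hP'vis h).mono hsr.le le_rfl⟩

open Filter in
/-- The play eventually stays left of a position that it visits infinitely often; two visits
there in the same state close a loop, whose annotation must be accepting. -/
theorem IsCertificate.frequently_acc [Finite Q] (hg : IsCertificate M w γ η α) {c : ℕ → Q × ℕ}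
    (hstep : ∀ m, StrategyStep γ (c m) (c (m + 1))) (hact : ∀ m, (c m).1 ∈ α (c m).2) :
    ∃ᶠ m in atTop, (c m).1 ∈ M.acc := by
  obtain ⟨i, hfreq, hle⟩ := Nat.exists_frequently_eq_eventually_le
    (Eventually.of_forall fun m => (hg.lt_length _ _ (hact m)).le)
  obtain ⟨N₀, hN₀⟩ := eventually_atTop.1 hle
  rw [frequently_atTop]
  intro N
  have hinf : {m | (c m).2 = i ∧ max N N₀ ≤ m}.Infinite :=
    Nat.frequently_atTop_iff_infinite.1 (hfreq.and_eventually (eventually_ge_atTop _))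
  obtain ⟨m₁, ⟨hm₁, hNm₁⟩, m₂, ⟨hm₂, -⟩, hlt, hq⟩ :=
    hinf.exists_lt_map_eq_of_mapsTo (f := fun m => (c m).1) (Set.mapsTo_univ _ _) Set.finite_univ
  obtain ⟨P, hP, hPvis⟩ := hg.exists_ann_of_isStrategyPath hlt
    ⟨fun m _ _ => hstep m, fun m hm _ => hN₀ m (by omega)⟩ hm₁ hm₂
  rw [← hq] at hP
  obtain ⟨m, hm, -, hacc⟩ := hPvis (hg.ann_loop _ _ _ hP)
  exact ⟨m, by omega, hacc⟩

lemma IsCertificate.exists_letter_of_mem (hg : IsCertificate M w γ η α) {q : Q} {i : ℕ}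
    (hq : q ∈ α i) :
    ∃ a, w[i]? = some a ∧ (M.delta q a = .tru ∨
      M.delta q a ≠ .tru ∧ (M.delta q a).satBy (moves (γ i) q) ∧ (moves (γ i) q).Nonempty) := by
  have hi := hg.lt_length _ _ hq
  refine ⟨w[i], List.getElem?_eq_getElem hi, ?_⟩
  obtain ⟨hsat, hne⟩ := hg.satBy _ _ _ hq (List.getElem?_eq_getElem hi)
  by_cases htru : M.delta q w[i] = .tru
  exacts [Or.inl htru, Or.inr ⟨htru, hsat, hne htru⟩]

end Certificate

section StrategyRun

variable [Fintype Q] (M : TAFW Q A) (w : List A) (γ : ℕ → Set (Q × Dir × Q))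

open Classical in
/-- The children of a configuration when `γ` is unfolded into a run; the children for the moves
of `γ` are indexed through an enumeration of `Q × Dir`. -/
noncomputable def stratChild : Config Q → ℕ → Option (Config Q)
  | .accept, _ => none
  | .conf q i, m =>
    match w[i]? with
    | none => none
    | some a =>
      if M.delta q a = .tru then if m = 0 then some .accept else none
      else ((Finset.univ : Finset (Q × Dir)).toList[m]?).bind fun τ =>
        if (q, τ.2, τ.1) ∈ γ i then (τ.2.apply i).map (.conf τ.1) else none

noncomputable def stratRun : List ℕ → Option (Config Q) :=
  List.foldl (fun oc m => oc.bind (stratChild M w γ · m)) (some (.conf M.start 0))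

variable {M w γ}

lemma stratRun_append (x : List ℕ) (m : ℕ) :
    stratRun M w γ (x ++ [m]) = (stratRun M w γ x).bind (stratChild M w γ · m) := by
  simp [stratRun, List.foldl_append]

lemma stratChild_of_tru {q : Q} {i : ℕ} {a : A} (ha : w[i]? = some a) (h : M.delta q a = .tru)
    (m : ℕ) : stratChild M w γ (.conf q i) m = if m = 0 then some .accept else none := by
  simp [stratChild, ha, h]

lemma stratChild_eq_some_of_ne_tru {q : Q} {i m : ℕ} {a : A} {c : Config Q}
    (ha : w[i]? = some a) (h : M.delta q a ≠ .tru) (hc : stratChild M w γ (.conf q i) m = some c) :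
    ∃ τ ∈ moves (γ i) q, ∃ j, τ.2.apply i = some j ∧ c = .conf τ.1 j := by
  simp only [stratChild, ha, h, if_false, Option.bind_eq_some_iff] at hc
  obtain ⟨τ, -, hτ⟩ := hc
  split_ifs at hτ with hmem
  obtain ⟨j, hj, rfl⟩ := Option.map_eq_some_iff.1 hτ
  exact ⟨τ, hmem, j, hj, rfl⟩

lemma stratChild_eq_some_conf {q q' : Q} {i j m : ℕ}
    (hc : stratChild M w γ (.conf q i) m = some (.conf q' j)) : StrategyStep γ (q, i) (q', j) := by
  cases ha : w[i]? with
  | none => simp [stratChild, ha] at hc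
  | some a =>
    by_cases h : M.delta q a = .tru
    · rw [stratChild_of_tru ha h] at hc
      split_ifs at hc
      cases hc
    · obtain ⟨τ, hτ, j', hj', hc'⟩ := stratChild_eq_some_of_ne_tru ha h hc
      cases hc'
      exact ⟨τ.2, hτ, hj'⟩

lemma exists_stratChild_eq {q : Q} {i : ℕ} {a : A} {τ : Q × Dir} {j : ℕ} (ha : w[i]? = some a)
    (h : M.delta q a ≠ .tru) (hτ : τ ∈ moves (γ i) q) (hj : τ.2.apply i = some j) :
    ∃ m, stratChild M w γ (.conf q i) m = some (.conf τ.1 j) := by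
  classical
  obtain ⟨m, hm⟩ := List.getElem?_of_mem (Finset.mem_toList.2 (Finset.mem_univ τ))
  refine ⟨m, ?_⟩
  simp only [stratChild, ha, h, if_false, hm, Option.bind_some]
  rw [if_pos (show (q, τ.2, τ.1) ∈ γ i from hτ), hj, Option.map_some]

end StrategyRun

section Soundness

variable [Fintype Q] {M : TAFW Q A} {w : List A} {γ : ℕ → Set (Q × Dir × Q)}
  {η : ℕ → Set (Q × Prop × Q)} {α : ℕ → Set Q}

lemma IsCertificate.mem_of_stratRun_eq (hg : IsCertificate M w γ η α) {x : List ℕ} {q : Q}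
    {i : ℕ} (hx : stratRun M w γ x = some (.conf q i)) : q ∈ α i := by
  rcases x.eq_nil_or_concat' with rfl | ⟨x, m, rfl⟩
  · cases hx
    exact hg.start_mem
  · obtain ⟨c, -, hc⟩ := Option.bind_eq_some_iff.1 ((stratRun_append x m).symm.trans hx)
    cases c with
    | accept => cases hc
    | conf q₀ i₀ =>
      obtain ⟨d, hd, hj⟩ := stratChild_eq_some_conf hc
      obtain ⟨j', hj', hq⟩ := (hg.move_mem _ _ _ _ hd).2
      rw [hj] at hj'
      cases hj'
      exact hq

lemma IsCertificate.isRun_stratRun (hg : IsCertificate M w γ η α) :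
    IsRun M w 0 (stratRun M w γ) where
  root := rfl
  tree x n h := by
    rw [stratRun_append] at h
    exact Option.isSome_of_isSome_bind h
  accept_leaf x hx n := by rw [stratRun_append, hx]; rfl
  node x q i hx := by
    obtain ⟨a, ha, htru | ⟨htru, hsat, hne⟩⟩ := hg.exists_letter_of_mem (hg.mem_of_stratRun_eq hx)
    · refine ⟨a, ha, Or.inr (Or.inl ⟨htru, ⟨0, ?_⟩, fun n c hc => ?_⟩)⟩
      · rw [stratRun_append, hx, Option.bind_some, stratChild_of_tru ha htru, if_pos rfl]
      · rw [stratRun_append, hx, Option.bind_some, stratChild_of_tru ha htru] at hc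
        split_ifs at hc
        exact (Option.some_injective _ hc).symm
    · have hfls : M.delta q a ≠ .fls := fun h => by rw [h] at hsat; exact hsat
      refine ⟨a, ha, Or.inr (Or.inr ⟨htru, hfls, _, hsat, fun τ hτ => ?_, fun n c hc => ?_⟩)⟩
      · obtain ⟨j, hj, -⟩ := (hg.move_mem _ _ _ _ hτ).2
        obtain ⟨m, hm⟩ := exists_stratChild_eq ha htru hτ hj
        exact ⟨m, j, hj, by rw [stratRun_append, hx, Option.bind_some, hm]⟩
      · rw [stratRun_append, hx, Option.bind_some] at hc
        exact stratChild_eq_some_of_ne_tru ha htru hc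

lemma IsCertificate.stratRun_eq_accept_of_isLeaf (hg : IsCertificate M w γ η α) {x : List ℕ}
    (hx : IsLeaf (stratRun M w γ) x) : stratRun M w γ x = some .accept := by
  obtain ⟨hsome, hnone⟩ := hx
  obtain ⟨c, hc⟩ := Option.isSome_iff_exists.1 hsome
  cases c with
  | accept => exact hc
  | conf q i =>
    exfalso
    obtain ⟨a, ha, htru | ⟨htru, -, ⟨τ, hτ⟩⟩⟩ := hg.exists_letter_of_mem (hg.mem_of_stratRun_eq hc)
    · have := hnone 0
      rw [stratRun_append, hc, Option.bind_some, stratChild_of_tru ha htru, if_pos rfl] at this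
      cases this
    · obtain ⟨j, hj, -⟩ := (hg.move_mem _ _ _ _ hτ).2
      obtain ⟨m, hm⟩ := exists_stratChild_eq ha htru hτ hj
      have := hnone m
      rw [stratRun_append, hc, Option.bind_some, hm] at this
      cases this

lemma exists_strategyStep_of_infBranch {b : ℕ → ℕ} (hb : InfBranch (stratRun M w γ) b) :
    ∃ c : ℕ → Q × ℕ, (∀ n, stratRun M w γ ((List.range n).map b) = some (.conf (c n).1 (c n).2))
      ∧ ∀ n, StrategyStep γ (c n) (c (n + 1)) := by
  have hsucc : ∀ n, stratRun M w γ ((List.range (n + 1)).map b) =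
      (stratRun M w γ ((List.range n).map b)).bind (stratChild M w γ · (b n)) := fun n => by
    rw [List.range_succ, List.map_append, List.map_singleton, stratRun_append]
  have hconf : ∀ n, ∃ c : Q × ℕ, stratRun M w γ ((List.range n).map b) = some (.conf c.1 c.2) := by
    intro n
    obtain ⟨c, hc⟩ := Option.isSome_iff_exists.1 (hb n)
    cases c with
    | conf q i => exact ⟨(q, i), hc⟩
    | accept =>
      have := hb (n + 1)
      rw [hsucc, hc] at this
      cases this
  choose c hc using hconf
  refine ⟨c, hc, fun n => ?_⟩
  have := hsucc n
  rw [hc, hc, Option.bind_some] at this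
  exact stratChild_eq_some_conf this.symm

theorem IsCertificate.accepts (hg : IsCertificate M w γ η α) : M.Accepts w 0 := by
  refine ⟨stratRun M w γ, hg.isRun_stratRun, fun x => hg.stratRun_eq_accept_of_isLeaf, ?_⟩
  intro b hb
  obtain ⟨c, hc, hstep⟩ := exists_strategyStep_of_infBranch hb
  have hfreq := hg.frequently_acc hstep fun n => hg.mem_of_stratRun_eq (hc n)
  obtain ⟨f, hf⟩ := Filter.frequently_exists.1
    (hfreq.mono fun n hn => ⟨⟨_, hn⟩, rfl⟩ : ∃ᶠ n in Filter.atTop, ∃ f : M.acc, (c n).1 = f)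
  refine ⟨f, f.2, fun N => ?_⟩
  obtain ⟨n, hn, hcn⟩ := Filter.frequently_atTop.1 hf N
  exact ⟨n, hn, (c n).2, by rw [hc, hcn]⟩

end Soundness

section Completeness

variable {M : TAFW Q A} {w : List A} {k : ℕ} {ρ : List ℕ → Option (Config Q)}

lemma IsRun.isSome_of_prefix (h : IsRun M w k ρ) {x y : List ℕ} (hxy : x <+: y)
    (hy : (ρ y).isSome) : (ρ x).isSome := by
  obtain ⟨z, rfl⟩ := hxy
  induction z using List.reverseRecOn with
  | nil => simpa using hy
  | append_singleton z m IH => exact IH (h.tree _ m (by rwa [← List.append_assoc] at hy))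

lemma AcceptingRun.exists_child (h : AcceptingRun M w k ρ) {x : List ℕ} {q : Q} {i : ℕ}
    (hx : ρ x = some (.conf q i)) : ∃ m c, ρ (x ++ [m]) = some c := by
  by_contra! hnone
  have := h.2.1 x ⟨by simp [hx], fun m => Option.eq_none_iff_forall_ne_some.2 (hnone m)⟩
  rw [hx] at this
  cases this

def NonAccChild (M : TAFW Q A) (ρ : List ℕ → Option (Config Q)) (y x : List ℕ) : Prop :=
  (∃ m, y = x ++ [m]) ∧ ∃ q i, ρ y = some (.conf q i) ∧ q ∉ M.acc

/-- An infinite chain of non-accepting children, continued upwards to the root, would be an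
infinite branch visiting accepting states only finitely often. -/
lemma AcceptingRun.wellFounded_nonAccChild (h : AcceptingRun M w k ρ) :
    WellFounded (NonAccChild M ρ) := by
  refine wellFounded_iff_isEmpty_descending_chain.2 ⟨fun ⟨f, hf⟩ => ?_⟩
  obtain ⟨b, hb⟩ := exists_map_range_eq_of_eq_append fun n => (hf n).1
  have hbranch : InfBranch ρ b := fun n => by
    obtain ⟨q, i, hq, -⟩ := (hf n).2
    have hprefix := List.map_range_prefix b (n := n) (m := (f 0).length + (n + 1)) (by omega)
    refine h.1.isSome_of_prefix hprefix ?_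
    rw [hb, hq]
    rfl
  obtain ⟨q, hq, hinf⟩ := h.2.2 b hbranch
  obtain ⟨n, hn, i, hn'⟩ := hinf ((f 0).length + 1)
  obtain ⟨m, rfl⟩ : ∃ m, n = (f 0).length + (m + 1) := ⟨n - (f 0).length - 1, by omega⟩
  obtain ⟨q', i', hq', hnacc⟩ := (hf m).2
  rw [hb, hq'] at hn'
  cases hn'
  exact hnacc hq

end Completeness

section RankCertificate

variable (ρ : List ℕ → Option (Config Q)) (v : List ℕ → Ordinal)

noncomputable def confRank (c : Q × ℕ) : Ordinal :=
  sInf (v '' {x | ρ x = some (.conf c.1 c.2)})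

def rankStrategy (i : ℕ) : Set (Q × Dir × Q) :=
  {e | ∃ x, ρ x = some (.conf e.1 i) ∧ v x = confRank ρ v (e.1, i) ∧
    ∃ m j, e.2.1.apply i = some j ∧ ρ (x ++ [m]) = some (.conf e.2.2 j)}

def rankAnnotation (i : ℕ) : Set (Q × Prop × Q) :=
  {e | ¬ e.2.1 → confRank ρ v (e.2.2, i) < confRank ρ v (e.1, i)}

def runActive (i : ℕ) : Set Q := {q | ∃ x, ρ x = some (.conf q i)}

variable {ρ v}

lemma exists_rank_eq_confRank {x : List ℕ} {q : Q} {i : ℕ} (hx : ρ x = some (.conf q i)) :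
    ∃ x', ρ x' = some (.conf q i) ∧ v x' = confRank ρ v (q, i) :=
  csInf_mem (Set.Nonempty.image v ⟨x, hx⟩)

lemma confRank_lt_of_mem_rankStrategy {M : TAFW Q A}
    (hv : ∀ y x, NonAccChild M ρ y x → v y < v x) {q q' : Q} {d : Dir} {i j : ℕ}
    (hmove : (q, d, q') ∈ rankStrategy ρ v i) (hj : d.apply i = some j) (hq' : q' ∉ M.acc) :
    confRank ρ v (q', j) < confRank ρ v (q, i) := by
  obtain ⟨x, -, hxv, m, j', hj', hchild⟩ := hmove
  rw [hj] at hj'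
  cases hj'
  calc confRank ρ v (q', j) ≤ v (x ++ [m]) := csInf_le' ⟨x ++ [m], hchild, rfl⟩
    _ < v x := hv _ _ ⟨⟨m, rfl⟩, q', j, hchild, hq'⟩
    _ = confRank ρ v (q, i) := hxv

/-- Following least-rank moves, the rank drops at every non-accepting state, so every loop of the
strategy meets an accepting state. -/
theorem AcceptingRun.isCertificate {M : TAFW Q A} {w : List A} (h : AcceptingRun M w 0 ρ)
    (hv : ∀ y x, NonAccChild M ρ y x → v y < v x) :
    IsCertificate M w (rankStrategy ρ v) (rankAnnotation ρ v) (runActive ρ) where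
  start_mem := ⟨[], h.1.root⟩
  lt_length i q := fun ⟨x, hx⟩ => by
    obtain ⟨a, ha, -⟩ := h.1.node x q i hx
    exact (List.getElem?_eq_some_iff.1 ha).1
  satBy i q a := fun ⟨x, hx⟩ ha => by
    obtain ⟨x, hx, hxv⟩ := exists_rank_eq_confRank (v := v) hx
    obtain ⟨a', ha', hcases⟩ := h.1.node x q i hx
    obtain rfl : a' = a := Option.some_injective _ (ha'.symm.trans ha)
    obtain ⟨m, c, hc⟩ := h.exists_child hx
    rcases hcases with ⟨-, hnone⟩ | ⟨htru, -⟩ | ⟨htru, -, S, hsat, hS, hchildren⟩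
    · rw [hnone m] at hc
      cases hc
    · exact ⟨by rw [htru]; trivial, fun hne => absurd htru hne⟩
    · have hsub : S ⊆ moves (rankStrategy ρ v i) q := fun τ hτ =>
        let ⟨n, j, hj, hn⟩ := hS τ hτ
        ⟨x, hx, hxv, n, j, hj, hn⟩
      obtain ⟨τ, hτ, -⟩ := hchildren m c hc
      exact ⟨PBF.satBy_mono hsub hsat, fun _ => ⟨τ, hsub hτ⟩⟩
  move_mem i q d q' := fun ⟨x, hx, _, m, j, hj, hchild⟩ => ⟨⟨x, hx⟩, j, hj, _, hchild⟩
  ann_stay i q q' hmove hq' := confRank_lt_of_mem_rankStrategy hv hmove rfl hq'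
  ann_trans i q P q' P' q'' h₁ h₂ hP :=
    (h₂ fun h => hP (Or.inr h)).trans (h₁ fun h => hP (Or.inl h))
  ann_back_fwd i q q₁ q' hback hfwd hP :=
    (confRank_lt_of_mem_rankStrategy hv hfwd rfl fun h => hP (Or.inr h)).trans
      (confRank_lt_of_mem_rankStrategy hv hback rfl fun h => hP (Or.inl h))
  ann_back_ann_fwd i q q₁ P q₂ q' hback hann hfwd hP :=
    ((confRank_lt_of_mem_rankStrategy hv hfwd rfl fun h => hP (Or.inr (Or.inr h))).trans
      (hann fun h => hP (Or.inr (Or.inl h)))).trans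
      (confRank_lt_of_mem_rankStrategy hv hback rfl fun h => hP (Or.inl h))
  ann_loop i q P hP := by_contra fun hnP => (hP hnP).false

theorem AcceptingRun.exists_isCertificate {M : TAFW Q A} {w : List A} (h : AcceptingRun M w 0 ρ) :
    ∃ γ η α, IsCertificate M w γ η α :=
  ⟨_, _, _, h.isCertificate (v := fun x => (h.wellFounded_nonAccChild.apply x).rank)
    fun _ _ hyx => Acc.rank_lt_of_rel _ hyx⟩

end RankCertificate

/-- The state of the NFA after reading `i` letters of a word with certificate `(γ, η, α)` is
`⟨α (i - 1), γ (i - 1), η (i - 1), α i⟩`. -/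
structure CertState (Q : Type) where
  prevActive : Set Q
  strat : Set (Q × Dir × Q)
  ann : Set (Q × Prop × Q)
  active : Set Q

def CertState.equivProd :
    CertState Q ≃ Set Q × Set (Q × Dir × Q) × Set (Q × Prop × Q) × Set Q where
  toFun s := (s.prevActive, s.strat, s.ann, s.active)
  invFun p := ⟨p.1, p.2.1, p.2.2.1, p.2.2.2⟩
  left_inv _ := rfl
  right_inv _ := rfl

noncomputable instance [Fintype Q] : Fintype (CertState Q) :=
  Fintype.ofEquiv _ CertState.equivProd.symm

lemma CertState.card_le [Fintype Q] :
    Fintype.card (CertState Q) ≤ 2 ^ (7 * Fintype.card Q ^ 2) := by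
  rw [Fintype.card_congr CertState.equivProd]
  simp only [Fintype.card_prod, Fintype.card_set, Dir.card_eq, Fintype.card_prop, ← pow_add]
  refine Nat.pow_le_pow_right two_pos ?_
  nlinarith [Nat.le_self_pow two_ne_zero (Fintype.card Q)]

/-- The conditions of a certificate at position `i`, between the NFA states before and after the
letter `a = w[i]?`. -/
structure CertStep (M : TAFW Q A) (a : Option A) (s t : CertState Q) : Prop where
  prevActive_eq : t.prevActive = s.active
  satBy : ∀ q ∈ s.active, ∃ b, a = some b ∧ (M.delta q b).satBy (moves t.strat q) ∧
    (M.delta q b ≠ .tru → (moves t.strat q).Nonempty)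
  move_mem : ∀ q d q', (q, d, q') ∈ t.strat → q ∈ s.active ∧ (d = .stay → q' ∈ s.active) ∧
    (d = .fwd → q' ∈ t.active) ∧ (d = .back → q' ∈ s.prevActive)
  ann_stay : ∀ q q', (q, .stay, q') ∈ t.strat → (q, q' ∈ M.acc, q') ∈ t.ann
  ann_trans : ∀ q P q' P' q'', (q, P, q') ∈ t.ann → (q', P', q'') ∈ t.ann →
    (q, P ∨ P', q'') ∈ t.ann
  ann_back_fwd : ∀ q q₁ q', (q, .back, q₁) ∈ t.strat → (q₁, .fwd, q') ∈ s.strat →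
    (q, q₁ ∈ M.acc ∨ q' ∈ M.acc, q') ∈ t.ann
  ann_back_ann_fwd : ∀ q q₁ P q₂ q', (q, .back, q₁) ∈ t.strat → (q₁, P, q₂) ∈ s.ann →
    (q₂, .fwd, q') ∈ s.strat → (q, q₁ ∈ M.acc ∨ P ∨ q' ∈ M.acc, q') ∈ t.ann
  ann_loop : ∀ q P, (q, P, q) ∈ t.ann → P

def certNFA (M : TAFW Q A) : NFA A (CertState Q) where
  step s a := {t | CertStep M (some a) s t}
  start := {s | s.prevActive = ∅ ∧ M.start ∈ s.active}
  accept := {s | s.active = ∅}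

section CertNFA

variable {M : TAFW Q A} {w : List A}

lemma certStep_of_active_eq_empty {s : CertState Q} (hs : s.active = ∅) (a : Option A) :
    CertStep M a s ⟨∅, ∅, ∅, ∅⟩ where
  prevActive_eq := hs.symm
  satBy := by simp [hs]
  move_mem := by simp
  ann_stay := by simp
  ann_trans := by simp
  ann_back_fwd := by simp
  ann_back_ann_fwd := by simp
  ann_loop := by simp

def certStates (γ : ℕ → Set (Q × Dir × Q)) (η : ℕ → Set (Q × Prop × Q)) (α : ℕ → Set Q) :
    ℕ → CertState Q
  | 0 => ⟨∅, ∅, ∅, α 0⟩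
  | i + 1 => ⟨α i, γ i, η i, α (i + 1)⟩

lemma certStates_active (γ : ℕ → Set (Q × Dir × Q)) (η : ℕ → Set (Q × Prop × Q))
    (α : ℕ → Set Q) (i : ℕ) : (certStates γ η α i).active = α i := by
  cases i <;> rfl

lemma IsCertificate.certStep {γ : ℕ → Set (Q × Dir × Q)} {η : ℕ → Set (Q × Prop × Q)}
    {α : ℕ → Set Q} (hg : IsCertificate M w γ η α) (i : ℕ) :
    CertStep M w[i]? (certStates γ η α i) (certStates γ η α (i + 1)) where
  prevActive_eq := (certStates_active γ η α i).symm
  satBy q hq := by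
    rw [certStates_active] at hq
    have hi := hg.lt_length _ _ hq
    exact ⟨w[i], List.getElem?_eq_getElem hi, hg.satBy _ _ _ hq (List.getElem?_eq_getElem hi)⟩
  move_mem q d q' hmove := by
    obtain ⟨hq, j, hj, hq'⟩ := hg.move_mem _ _ _ _ hmove
    rw [certStates_active]
    refine ⟨hq, ?_, ?_, ?_⟩ <;> rintro rfl <;> cases i <;> cases hj <;> exact hq'
  ann_stay := hg.ann_stay i
  ann_trans := hg.ann_trans i
  ann_back_fwd q q₁ q' hback hfwd := by
    cases i with
    | zero =>
      obtain ⟨-, j, hj, -⟩ := hg.move_mem _ _ _ _ hback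
      cases hj
    | succ i => exact hg.ann_back_fwd i _ _ _ hback hfwd
  ann_back_ann_fwd q q₁ P q₂ q' hback hann hfwd := by
    cases i with
    | zero =>
      obtain ⟨-, j, hj, -⟩ := hg.move_mem _ _ _ _ hback
      cases hj
    | succ i => exact hg.ann_back_ann_fwd i _ _ _ _ _ hback hann hfwd
  ann_loop := hg.ann_loop i

lemma isCertificate_of_certStep {f : ℕ → CertState Q} (h0 : f 0 ∈ (certNFA M).start)
    (hf : ∀ i, CertStep M w[i]? (f i) (f (i + 1))) :
    IsCertificate M w (fun i => (f (i + 1)).strat) (fun i => (f (i + 1)).ann)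
      (fun i => (f i).active) where
  start_mem := h0.2
  lt_length i q hq := by
    obtain ⟨b, hb, -⟩ := (hf i).satBy q hq
    exact (List.getElem?_eq_some_iff.1 hb).1
  satBy i q a hq ha := by
    obtain ⟨b, hb, h⟩ := (hf i).satBy q hq
    rw [ha] at hb
    cases hb
    exact h
  move_mem i q d q' hmove := by
    obtain ⟨hq, hstay, hfwd, hback⟩ := (hf i).move_mem q d q' hmove
    refine ⟨hq, ?_⟩
    cases d with
    | stay => exact ⟨i, rfl, hstay rfl⟩
    | fwd => exact ⟨i + 1, rfl, hfwd rfl⟩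
    | back =>
      cases i with
      | zero => simpa [h0.1] using hback rfl
      | succ i => exact ⟨i, rfl, (hf i).prevActive_eq ▸ hback rfl⟩
  ann_stay i := (hf i).ann_stay
  ann_trans i := (hf i).ann_trans
  ann_back_fwd i := (hf (i + 1)).ann_back_fwd
  ann_back_ann_fwd i := (hf (i + 1)).ann_back_ann_fwd
  ann_loop i := (hf i).ann_loop

theorem mem_certNFA_accepts_iff :
    w ∈ (certNFA M).accepts ↔ ∃ γ η α, IsCertificate M w γ η α := by
  simp only [NFA.mem_accepts, NFA.mem_evalFrom_iff_exists_chain]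
  constructor
  · rintro ⟨_, hacc, f, h0, hf, rfl⟩
    classical
    -- the empty state may follow any state without active states, so the chain extends past `w`
    let g i : CertState Q := if i ≤ w.length then f i else ⟨∅, ∅, ∅, ∅⟩
    refine ⟨_, _, _, isCertificate_of_certStep (f := g) (by simpa [g] using h0) fun i => ?_⟩
    rcases lt_or_ge i w.length with hi | hi
    · simpa [g, certNFA, hi.le, Nat.succ_le_of_lt hi, List.getElem?_eq_getElem hi] using hf i hi
    · have hg : g (i + 1) = ⟨∅, ∅, ∅, ∅⟩ := if_neg (by omega)
      rw [hg]
      refine certStep_of_active_eq_empty ?_ _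
      rcases hi.eq_or_lt with rfl | hi
      · simpa [g, certNFA] using hacc
      · simp [g, hi.not_ge]
  · rintro ⟨γ, η, α, hg⟩
    refine ⟨_, ?_, certStates γ η α, ⟨rfl, hg.start_mem⟩, fun i hi => ?_, rfl⟩
    · show (certStates γ η α w.length).active = ∅
      rw [certStates_active]
      exact Set.eq_empty_of_forall_notMem fun q hq => (hg.lt_length _ _ hq).false
    · simpa [certNFA, List.getElem?_eq_getElem hi] using hg.certStep i

end CertNFA

/-- Corollary 4.1: every 2AFW with finite state set `Q` has an
equivalent NFA with at most `2^{O(|Q|²)}` states. -/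
theorem tafw_to_nfa :
    ∃ c : ℕ, ∀ (Q A : Type) (_ : Fintype Q) (M : TAFW Q A),
      ∃ (S : Type) (_ : Fintype S) (N : NFA A S),
        Fintype.card S ≤ 2 ^ (c * Fintype.card Q ^ 2) ∧
        ∀ w : List A, w ∈ N.accepts ↔ M.Accepts w 0 := by
  refine ⟨7, fun Q A _ M => ⟨CertState Q, inferInstance, certNFA M, CertState.card_le, fun w => ?_⟩⟩
  rw [mem_certNFA_accepts_iff]
  exact ⟨fun ⟨_, _, _, hg⟩ => hg.accepts, fun ⟨_, hρ⟩ => hρ.exists_isCertificate⟩
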